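/- Fix X ∈ ℝ^{n×k} and y ∈ ℝ^n, and let U be the set of matrices Δ ∈ ℝ^{n×k} whose entrywise ℓ1-norm (sum of absolute values of all entries) is at most ρ > 0. Then for every β ∈ ℝ^k, ∫_U ‖y − (X + Δ)β‖_2^2 dΔ = ((2ρ)^{nk}/(nk)!) · (‖y − Xβ‖_2^2 + (2nρ^2/((nk+1)(nk+2)))·‖β‖_2^2). Consequently, minimizing the averaged squared residual over U is equivalent to ridge regression with penalty λ = 2nρ^2/((nk+1)(nk+2)). -/

import Mathlib

/-!
Uncurrying turns `U` into the ℓ¹ ball of `ι × κ → ℝ`, of dimension `N = n k`. Reflecting one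
coordinate preserves the ball, so the coordinates have mean zero and are uncorrelated; hence the
averaged squared residual splits into `vol · ‖y - Xβ‖²` plus `n · m · ‖β‖²`, where `m` is the
second moment of one coordinate. Slicing the ball along a coordinate,
`vol B_{N+1}(ρ) = ∫ vol B_N(ρ - |t|) dt`, gives `vol B_N(ρ) = (2ρ)^N / N!` by induction, and the
same slicing gives `m = vol B_N(ρ) · 2ρ² / ((N + 1)(N + 2))`.
-/

open MeasureTheory Set Function

open scoped Nat

theorem volume_preserving_curry (ι κ α : Type*) [Fintype ι] [Fintype κ] [MeasureSpace α]
    [SigmaFinite (volume : Measure α)] :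
    MeasurePreserving (MeasurableEquiv.curry ι κ α) volume volume := by
  refine MeasurePreserving.symm (MeasurableEquiv.curry ι κ α).symm
    ⟨MeasurableEquiv.measurable _, (Measure.pi_eq fun s hs => ?_).symm⟩
  rw [Measure.map_apply (MeasurableEquiv.measurable _) (MeasurableSet.univ_pi hs)]
  have hbox : (MeasurableEquiv.curry ι κ α).symm ⁻¹' univ.pi s =
      univ.pi fun i => univ.pi fun j => s (i, j) := by
    ext x
    simp [MeasurableEquiv.coe_curry_symm]
  simp [hbox, volume_pi_pi, Fintype.prod_prod_type]

section Reflection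

variable {ι : Type*} [Fintype ι] [DecidableEq ι]

theorem volume_preserving_update_neg (i : ι) :
    MeasurePreserving (fun x : ι → ℝ => update x i (-x i)) volume volume := by
  have h : (fun x : ι → ℝ => update x i (-x i)) =
      fun x j => (if j = i then Neg.neg else id) (x j) := by
    ext x j
    rcases eq_or_ne j i with rfl | hj <;> simp [*]
  rw [h]
  refine volume_preserving_pi fun j => ?_
  split_ifs
  · exact Measure.measurePreserving_neg volume
  · exact MeasurePreserving.id volume

theorem measurableEmbedding_update_neg (i : ι) :
    MeasurableEmbedding fun x : ι → ℝ => update x i (-x i) :=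
  (MeasurableEquiv.ofInvolutive _
    (fun x => by simp only [update_self, neg_neg, update_idem, update_eq_self])
    (volume_preserving_update_neg i).measurable).measurableEmbedding

end Reflection

theorem MeasureTheory.MeasurePreserving.setIntegral_eq_zero_of_odd {α : Type*}
    [MeasurableSpace α] {μ : Measure α} {T : α → α} (hT : MeasurePreserving T μ μ)
    (hTe : MeasurableEmbedding T) {s : Set α} (hs : T ⁻¹' s = s) {f : α → ℝ}
    (hf : ∀ x, f (T x) = -f x) :
    ∫ x in s, f x ∂μ = 0 := by
  have h := hT.setIntegral_preimage_emb hTe f s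
  simp only [hs, hf, integral_neg] at h
  linarith

theorem setIntegral_sq_sub_sum_mul {ι : Type*} [Fintype ι] [DecidableEq ι]
    (μ : Measure (ι → ℝ)) [IsFiniteMeasureOnCompacts μ] {s : Set (ι → ℝ)} (hs : IsCompact s)
    {m : ℝ} (hmean : ∀ i, ∫ x in s, x i ∂μ = 0)
    (hcov : ∀ i j, ∫ x in s, x i * x j ∂μ = if i = j then m else 0) (c : ℝ) (w : ι → ℝ) :
    ∫ x in s, (c - ∑ i, w i * x i) ^ 2 ∂μ = μ.real s * c ^ 2 + m * ∑ i, w i ^ 2 := by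
  have hint : ∀ f : (ι → ℝ) → ℝ, Continuous f → IntegrableOn f s μ :=
    fun f hf => hf.continuousOn.integrableOn_compact hs
  have hsq : ∀ x : ι → ℝ, (∑ i, w i * x i) ^ 2 = ∑ i, ∑ j, w i * w j * (x i * x j) := fun x => by
    rw [sq, Finset.sum_mul_sum]
    exact Finset.sum_congr rfl fun i _ => Finset.sum_congr rfl fun j _ => by ring
  have hlin : ∫ x in s, ∑ i, w i * x i ∂μ = 0 := by
    rw [integral_finsetSum _ fun i _ => hint _ (by fun_prop)]
    simp [integral_const_mul, hmean]
  have hquad : ∫ x in s, ∑ i, ∑ j, w i * w j * (x i * x j) ∂μ = m * ∑ i, w i ^ 2 := by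
    rw [integral_finsetSum _ fun i _ => hint _ (by fun_prop), Finset.mul_sum]
    refine Finset.sum_congr rfl fun i _ => ?_
    rw [integral_finsetSum _ fun j _ => hint _ (by fun_prop)]
    simp [integral_const_mul, hcov, sq, mul_comm]
  simp only [sub_sq, hsq]
  rw [integral_add (hint _ (by fun_prop)) (hint _ (by fun_prop)),
    integral_sub (hint _ (by fun_prop)) (hint _ (by fun_prop)), integral_const_mul, hlin, hquad,
    setIntegral_const, smul_eq_mul]
  ring

theorem integral_sub_pow (ρ : ℝ) (N : ℕ) :
    ∫ s in (0 : ℝ)..ρ, (ρ - s) ^ N = ρ ^ (N + 1) / (N + 1) := by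
  simp [intervalIntegral.integral_comp_sub_left (fun s => s ^ N), integral_pow]

theorem integral_sq_mul_sub_pow (ρ : ℝ) (N : ℕ) :
    ∫ s in (0 : ℝ)..ρ, s ^ 2 * (ρ - s) ^ N = 2 * ρ ^ (N + 3) / ((N + 1) * (N + 2) * (N + 3)) := by
  have h := intervalIntegral.integral_comp_sub_left (fun u : ℝ => (ρ - u) ^ 2 * u ^ N) ρ
    (a := 0) (b := ρ)
  simp only [sub_sub_cancel, sub_zero, sub_self] at h
  have hexp : ∀ u : ℝ, (ρ - u) ^ 2 * u ^ N = ρ ^ 2 * u ^ N - 2 * ρ * u ^ (N + 1) + u ^ (N + 2) :=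
    fun u => by ring
  have hint : ∀ f : ℝ → ℝ, Continuous f → IntervalIntegrable f volume 0 ρ :=
    fun f hf => hf.intervalIntegrable 0 ρ
  rw [h]
  simp only [hexp]
  rw [intervalIntegral.integral_add (hint _ (by fun_prop)) (hint _ (by fun_prop)),
    intervalIntegral.integral_sub (hint _ (by fun_prop)) (hint _ (by fun_prop)),
    intervalIntegral.integral_const_mul, intervalIntegral.integral_const_mul, integral_pow,
    integral_pow, integral_pow]
  push_cast
  field_simp
  ring

def l1ClosedBall (ι : Type*) [Fintype ι] (ρ : ℝ) : Set (ι → ℝ) := {x | ∑ i, |x i| ≤ ρ}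

section l1ClosedBall

variable {ι κ : Type*} [Fintype ι] [Fintype κ] {ρ : ℝ}

theorem isClosed_l1ClosedBall : IsClosed (l1ClosedBall ι ρ) :=
  isClosed_le (by fun_prop) continuous_const

theorem measurableSet_l1ClosedBall : MeasurableSet (l1ClosedBall ι ρ) :=
  isClosed_l1ClosedBall.measurableSet

theorem l1ClosedBall_subset_closedBall : l1ClosedBall ι ρ ⊆ Metric.closedBall 0 ρ := by
  intro x hx
  rw [mem_closedBall_zero_iff,
    pi_norm_le_iff_of_nonneg ((Finset.sum_nonneg fun i _ => abs_nonneg (x i)).trans hx)]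
  exact fun i => (Finset.single_le_sum (fun j _ => abs_nonneg (x j)) (Finset.mem_univ i)).trans hx

theorem isCompact_l1ClosedBall : IsCompact (l1ClosedBall ι ρ) :=
  (isCompact_closedBall 0 ρ).of_isClosed_subset isClosed_l1ClosedBall
    l1ClosedBall_subset_closedBall

theorem l1ClosedBall_eq_empty (hρ : ρ < 0) : l1ClosedBall ι ρ = ∅ :=
  eq_empty_of_forall_notMem fun x hx =>
    (hρ.trans_le (Finset.sum_nonneg fun i _ => abs_nonneg (x i))).not_ge hx

theorem preimage_piCongrLeft_l1ClosedBall (e : ι ≃ κ) :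
    MeasurableEquiv.piCongrLeft (fun _ => ℝ) e ⁻¹' l1ClosedBall κ ρ = l1ClosedBall ι ρ := by
  ext x
  simp only [l1ClosedBall, mem_preimage, mem_ofPred_eq, ← e.sum_comp,
    MeasurableEquiv.coe_piCongrLeft, Equiv.piCongrLeft_apply_apply]

theorem preimage_update_neg_l1ClosedBall [DecidableEq ι] (i : ι) :
    (fun x : ι → ℝ => update x i (-x i)) ⁻¹' l1ClosedBall ι ρ = l1ClosedBall ι ρ := by
  ext x
  have h : ∀ j, |update x i (-x i) j| = |x j| := fun j => by
    rcases eq_or_ne j i with rfl | hj <;> simp [*]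
  simp only [l1ClosedBall, mem_preimage, mem_ofPred_eq, h]

theorem insertNth_mem_l1ClosedBall_iff {N : ℕ} (i : Fin (N + 1)) (t : ℝ) (x : Fin N → ℝ) :
    i.insertNth t x ∈ l1ClosedBall (Fin (N + 1)) ρ ↔ x ∈ l1ClosedBall (Fin N) (ρ - |t|) := by
  simp only [l1ClosedBall, mem_ofPred_eq, Fin.sum_univ_succAbove _ i, Fin.insertNth_apply_same,
    Fin.insertNth_apply_succAbove, le_sub_iff_add_le']

theorem setIntegral_l1ClosedBall_comp_piCongrLeft (e : ι ≃ κ) (g : (κ → ℝ) → ℝ) :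
    ∫ x in l1ClosedBall ι ρ, g (MeasurableEquiv.piCongrLeft (fun _ => ℝ) e x) =
      ∫ y in l1ClosedBall κ ρ, g y := by
  rw [← preimage_piCongrLeft_l1ClosedBall e]
  exact (volume_measurePreserving_piCongrLeft _ e).setIntegral_preimage_emb
    (MeasurableEquiv.measurableEmbedding _) g _

theorem setIntegral_l1ClosedBall_succ {N : ℕ} (i : Fin (N + 1)) {f : (Fin (N + 1) → ℝ) → ℝ}
    (hf : Continuous f) :
    ∫ x in l1ClosedBall (Fin (N + 1)) ρ, f x =
      ∫ t, ∫ x in l1ClosedBall (Fin N) (ρ - |t|), f (i.insertNth t x) := by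
  set e := (MeasurableEquiv.piFinSuccAbove (fun _ : Fin (N + 1) => ℝ) i).symm
  have he : MeasurePreserving e (volume.prod volume) volume :=
    (volume_preserving_piFinSuccAbove (fun _ => ℝ) i).symm
  have hmeas : MeasurableSet (e ⁻¹' l1ClosedBall (Fin (N + 1)) ρ) :=
    measurableSet_l1ClosedBall.preimage e.measurable
  have hint : IntegrableOn (fun z => f (e z)) (e ⁻¹' l1ClosedBall (Fin (N + 1)) ρ)
      (volume.prod volume) :=
    (he.integrableOn_comp_preimage e.measurableEmbedding).2
      (hf.continuousOn.integrableOn_compact isCompact_l1ClosedBall)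
  rw [← he.setIntegral_preimage_emb e.measurableEmbedding, ← integral_indicator hmeas,
    integral_prod _ ((integrable_indicator_iff hmeas).2 hint)]
  refine congrArg _ (funext fun t => ?_)
  rw [← integral_indicator measurableSet_l1ClosedBall]
  refine congrArg _ (funext fun x => ?_)
  have he_apply : e (t, x) = i.insertNth t x := rfl
  classical
  rw [indicator_apply, indicator_apply, mem_preimage, he_apply, insertNth_mem_l1ClosedBall_iff]

-- The volume formula in dimension `N` is a hypothesis so that this lemma also drives the
-- induction proving it.
theorem setIntegral_l1ClosedBall_succ_comp_abs_eval {N : ℕ}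
    (hvol : ∀ r, 0 ≤ r → volume.real (l1ClosedBall (Fin N) r) = (2 * r) ^ N / N !)
    (hρ : 0 ≤ ρ) (i : Fin (N + 1)) {g : ℝ → ℝ} (hg : Continuous g) :
    ∫ x in l1ClosedBall (Fin (N + 1)) ρ, g |x i| =
      2 ^ (N + 1) / N ! * ∫ s in (0 : ℝ)..ρ, g s * (ρ - s) ^ N := by
  rw [setIntegral_l1ClosedBall_succ i (by fun_prop)]
  simp only [Fin.insertNth_apply_same, setIntegral_const, smul_eq_mul]
  rw [integral_comp_abs (f := fun s => volume.real (l1ClosedBall (Fin N) (ρ - s)) * g s),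
    setIntegral_eq_of_subset_of_forall_sdiff_eq_zero measurableSet_Ioi Ioc_subset_Ioi_self,
    ← intervalIntegral.integral_of_le hρ,
    intervalIntegral.integral_congr (g := fun s => 2 ^ N / N ! * (g s * (ρ - s) ^ N)),
    intervalIntegral.integral_const_mul]
  · ring
  · intro s hs
    rw [uIcc_of_le hρ] at hs
    simp only [hvol _ (sub_nonneg.2 hs.2), mul_pow]
    ring
  · intro s hs
    have hρs : ρ - s < 0 := by
      simp only [mem_sdiff, mem_Ioi, mem_Ioc, not_and, not_le] at hs
      linarith [hs.2 hs.1]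
    simp [l1ClosedBall_eq_empty hρs]

theorem volume_real_l1ClosedBall_fin (N : ℕ) (hρ : 0 ≤ ρ) :
    volume.real (l1ClosedBall (Fin N) ρ) = (2 * ρ) ^ N / N ! := by
  induction N generalizing ρ with
  | zero =>
    rw [show l1ClosedBall (Fin 0) ρ = univ by simp [l1ClosedBall, hρ], measureReal_def,
      volume_pi, Measure.pi_univ]
    simp
  | succ N ih =>
    have h := setIntegral_l1ClosedBall_succ_comp_abs_eval (fun r hr => ih hr) hρ 0
      (g := fun _ => 1) continuous_const
    rw [setIntegral_const, smul_eq_mul, mul_one] at h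
    rw [h]
    simp only [one_mul, integral_sub_pow, Nat.factorial_succ]
    push_cast
    field_simp
    ring

theorem volume_real_l1ClosedBall (hρ : 0 ≤ ρ) :
    volume.real (l1ClosedBall ι ρ) = (2 * ρ) ^ Fintype.card ι / (Fintype.card ι)! := by
  rw [← volume_real_l1ClosedBall_fin _ hρ,
    ← preimage_piCongrLeft_l1ClosedBall (Fintype.equivFin ι),
    (volume_measurePreserving_piCongrLeft _ _).measureReal_preimage
      measurableSet_l1ClosedBall.nullMeasurableSet]

theorem setIntegral_sq_l1ClosedBall_fin {N : ℕ} (hρ : 0 ≤ ρ) (i : Fin (N + 1)) :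
    ∫ x in l1ClosedBall (Fin (N + 1)) ρ, x i ^ 2 =
      (2 * ρ) ^ (N + 1) / (N + 1)! * (2 * ρ ^ 2 / ((N + 1 + 1) * (N + 1 + 2))) := by
  have h := setIntegral_l1ClosedBall_succ_comp_abs_eval
    (fun r hr => volume_real_l1ClosedBall_fin N hr) hρ i (g := (· ^ 2)) (by fun_prop)
  simp only [sq_abs] at h
  rw [h, integral_sq_mul_sub_pow, Nat.factorial_succ]
  push_cast
  field_simp
  ring

theorem setIntegral_sq_l1ClosedBall (hρ : 0 ≤ ρ) (i : ι) :
    ∫ x in l1ClosedBall ι ρ, x i ^ 2 = (2 * ρ) ^ Fintype.card ι / (Fintype.card ι)! *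
      (2 * ρ ^ 2 / ((Fintype.card ι + 1) * (Fintype.card ι + 2))) := by
  obtain ⟨N, hN⟩ : ∃ N, Fintype.card ι = N + 1 :=
    ⟨Fintype.card ι - 1, by have := Fintype.card_pos_iff.2 ⟨i⟩; omega⟩
  set e := Fintype.equivFinOfCardEq hN
  have h := setIntegral_l1ClosedBall_comp_piCongrLeft (ρ := ρ) e (fun y => y (e i) ^ 2)
  simp only [MeasurableEquiv.coe_piCongrLeft, Equiv.piCongrLeft_apply_apply] at h
  rw [h, setIntegral_sq_l1ClosedBall_fin hρ, hN]
  push_cast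
  ring

theorem setIntegral_eval_l1ClosedBall (i : ι) : ∫ x in l1ClosedBall ι ρ, x i = 0 := by
  classical
  exact (volume_preserving_update_neg i).setIntegral_eq_zero_of_odd
    (measurableEmbedding_update_neg i) (preimage_update_neg_l1ClosedBall i) (fun x => by simp)

theorem setIntegral_mul_l1ClosedBall [DecidableEq ι] (hρ : 0 ≤ ρ) (i j : ι) :
    ∫ x in l1ClosedBall ι ρ, x i * x j = if i = j then (2 * ρ) ^ Fintype.card ι /
      (Fintype.card ι)! * (2 * ρ ^ 2 / ((Fintype.card ι + 1) * (Fintype.card ι + 2))) else 0 := by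
  split_ifs with hij
  · subst hij
    simp only [← sq, setIntegral_sq_l1ClosedBall hρ]
  · exact (volume_preserving_update_neg i).setIntegral_eq_zero_of_odd
      (measurableEmbedding_update_neg i) (preimage_update_neg_l1ClosedBall i)
      (fun x => by simp [Ne.symm hij])

theorem setIntegral_sum_sq_sub_sum_add_mul (hρ : 0 ≤ ρ) (X : ι → κ → ℝ) (y : ι → ℝ)
    (β : κ → ℝ) :
    ∫ Δ in {Δ : ι → κ → ℝ | ∑ a, ∑ b, |Δ a b| ≤ ρ}, ∑ a, (y a - ∑ b, (X a b + Δ a b) * β b) ^ 2 =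
      (2 * ρ) ^ (Fintype.card ι * Fintype.card κ) / (Fintype.card ι * Fintype.card κ)! *
        (∑ a, (y a - ∑ b, X a b * β b) ^ 2 +
          2 * Fintype.card ι * ρ ^ 2 /
            ((Fintype.card ι * Fintype.card κ + 1) * (Fintype.card ι * Fintype.card κ + 2)) *
              ∑ b, β b ^ 2) := by
  classical
  have hU : MeasurableEquiv.curry ι κ ℝ ⁻¹' {Δ | ∑ a, ∑ b, |Δ a b| ≤ ρ} =
      l1ClosedBall (ι × κ) ρ := by
    ext x
    simp [l1ClosedBall, Fintype.sum_prod_type]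
  rw [← (volume_preserving_curry ι κ ℝ).setIntegral_preimage_emb
    (MeasurableEquiv.measurableEmbedding _), hU]
  set w : ι → ι × κ → ℝ := fun a p => if p.1 = a then β p.2 else 0
  have hrow : ∀ (x : ι × κ → ℝ) a,
      y a - ∑ b, (X a b + MeasurableEquiv.curry ι κ ℝ x a b) * β b =
        (y a - ∑ b, X a b * β b) - ∑ p, w a p * x p := by
    intro x a
    have hw_row : ∑ p, w a p * x p = ∑ b, x (a, b) * β b := by
      simp [w, Fintype.sum_prod_type, mul_comm]
    simp only [hw_row, MeasurableEquiv.coe_curry, curry_apply, add_mul, Finset.sum_add_distrib]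
    ring
  have hw : ∀ a, ∑ p, w a p ^ 2 = ∑ b, β b ^ 2 := by
    simp [w, Fintype.sum_prod_type, ite_pow]
  simp only [hrow]
  rw [integral_finsetSum _ fun a _ =>
    (by fun_prop : Continuous _).continuousOn.integrableOn_compact isCompact_l1ClosedBall]
  simp only [setIntegral_sq_sub_sum_mul (volume : Measure (ι × κ → ℝ)) isCompact_l1ClosedBall
      setIntegral_eval_l1ClosedBall (setIntegral_mul_l1ClosedBall hρ),
    hw, volume_real_l1ClosedBall hρ, Finset.sum_add_distrib, ← Finset.mul_sum, Finset.sum_const,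
    Finset.card_univ, Fintype.card_prod, nsmul_eq_mul]
  push_cast
  ring

end l1ClosedBall

theorem averaged_robust_diamond_general (n k : ℕ)
    (ρ : ℝ) (hρ : 0 < ρ) (X : Fin n → Fin k → ℝ) (y : Fin n → ℝ)
    (U : Set (Fin n → Fin k → ℝ))
    (hU : U = {Δ | ∑ a, ∑ b, |Δ a b| ≤ ρ}) :
    (∀ β : Fin k → ℝ,
      ∫ Δ in U, (∑ a, (y a - ∑ b, (X a b + Δ a b) * β b) ^ 2) =
        ((2 * ρ) ^ (n * k) / (n * k).factorial) *
          ((∑ a, (y a - ∑ b, X a b * β b) ^ 2) +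
            (2 * n * ρ ^ 2 / ((n * k + 1) * (n * k + 2))) * ∑ b, (β b) ^ 2)) ∧
    (∀ β : Fin k → ℝ,
      (∀ β' : Fin k → ℝ,
        (∫ Δ in U, (∑ a, (y a - ∑ b, (X a b + Δ a b) * β b) ^ 2)) ≤
          ∫ Δ in U, (∑ a, (y a - ∑ b, (X a b + Δ a b) * β' b) ^ 2)) ↔
      (∀ β' : Fin k → ℝ,
        (∑ a, (y a - ∑ b, X a b * β b) ^ 2) +
            (2 * n * ρ ^ 2 / ((n * k + 1) * (n * k + 2))) * ∑ b, (β b) ^ 2 ≤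
          (∑ a, (y a - ∑ b, X a b * β' b) ^ 2) +
            (2 * n * ρ ^ 2 / ((n * k + 1) * (n * k + 2))) * ∑ b, (β' b) ^ 2)) := by
  subst hU
  have hint := fun β => setIntegral_sum_sq_sub_sum_add_mul hρ.le X y β
  simp only [Fintype.card_fin] at hint
  have hvol : 0 < (2 * ρ) ^ (n * k) / ((n * k).factorial : ℝ) := by positivity
  exact ⟨hint, fun β => forall_congr' fun β' => by rw [hint, hint, mul_le_mul_iff_right₀ hvol]⟩

theorem averaged_robust_diamond (n k : ℕ) (hn : 1 ≤ n) (hk : 1 ≤ k)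
    (ρ : ℝ) (hρ : 0 < ρ) (X : Fin n → Fin k → ℝ) (y : Fin n → ℝ)
    (U : Set (Fin n → Fin k → ℝ))
    (hU : U = {Δ | ∑ a, ∑ b, |Δ a b| ≤ ρ}) :
    (∀ β : Fin k → ℝ,
      ∫ Δ in U, (∑ a, (y a - ∑ b, (X a b + Δ a b) * β b) ^ 2) =
        ((2 * ρ) ^ (n * k) / (n * k).factorial) *
          ((∑ a, (y a - ∑ b, X a b * β b) ^ 2) +
            (2 * n * ρ ^ 2 / ((n * k + 1) * (n * k + 2))) * ∑ b, (β b) ^ 2)) ∧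
    (∀ β : Fin k → ℝ,
      (∀ β' : Fin k → ℝ,
        (∫ Δ in U, (∑ a, (y a - ∑ b, (X a b + Δ a b) * β b) ^ 2)) ≤
          ∫ Δ in U, (∑ a, (y a - ∑ b, (X a b + Δ a b) * β' b) ^ 2)) ↔
      (∀ β' : Fin k → ℝ,
        (∑ a, (y a - ∑ b, X a b * β b) ^ 2) +
            (2 * n * ρ ^ 2 / ((n * k + 1) * (n * k + 2))) * ∑ b, (β b) ^ 2 ≤
          (∑ a, (y a - ∑ b, X a b * β' b) ^ 2) +
            (2 * n * ρ ^ 2 / ((n * k + 1) * (n * k + 2))) * ∑ b, (β' b) ^ 2)) :=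
  averaged_robust_diamond_general n k ρ hρ X y U hU
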